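/- Suppose a⁰_{n,m} = a¹_{n,m} = 0, b⁰_{n,m} = 1, and b¹_{n,m} = 4ñ for all (n,m) ∈ ℤ², where ñ ∈ {1,…,p₁} is the representative of n modulo p₁ (so Aₙ = 0 and Bₙ = S + S⁻¹ + 4ñ·I is a shifted discrete 1D Schrödinger operator). Then σ(𝒥) = ⋃_{n=1}^{p₁} [4n − 2, 4n + 2] = [2, 4p₁ + 2]; in particular mes(σ(𝒥)) = 4p₁, so the estimate mes(σ(𝒥)) ≤ 4 min_β Σ_{n=1}^{p₁}|b⁰_{n,β}| + 4 min_α Σ_{m=1}^{p₂}|a¹_{α,m}| = 4p₁ is attained with equality. -/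

import Mathlib

open scoped ComplexConjugate Matrix ENNReal

noncomputable section

/-- `ℓ²(ℤ)`, the Hilbert space of square-summable complex sequences indexed by `ℤ`. -/
abbrev H1 : Type := lp (fun _ : ℤ => ℂ) 2

/-- `ℓ²(ℤ²)`, the Hilbert space of square-summable complex sequences indexed by `ℤ × ℤ`. -/
abbrev H2 : Type := lp (fun _ : ℤ × ℤ => ℂ) 2

/-- `x` is doubly periodic with period `p₁` in the first index and `p₂` in the second index. -/
def Periodic2 {α : Type*} (p₁ p₂ : ℕ) (x : ℤ → ℤ → α) : Prop :=
  ∀ n m : ℤ, x (n + (p₁ : ℤ)) m = x n m ∧ x n (m + (p₂ : ℤ)) = x n m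

/-- `J` acts as the 2D periodic Jacobi operator `(𝒥 f)ₙ = Aₙ f_{n+1} + Bₙ fₙ + A*_{n−1} f_{n−1}`
on `ℓ²(ℤ²) = ℓ²(ℤ; ℓ²(ℤ))`, written out entrywise, where `Aₙ = S·A⁰ₙ + A¹ₙ + (S·A⁰ₙ)*` and
`Bₙ = S·B⁰ₙ + B¹ₙ + (S·B⁰ₙ)*` with `A⁰ₙ = diag(a⁰ₙₘ)`, `A¹ₙ = diag(a¹ₙₘ)`,
`B⁰ₙ = diag(b⁰ₙₘ)`, `B¹ₙ = diag(b¹ₙₘ)` and `S` the shift `(Sz)ₘ = z_{m−1}`. -/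
def IsJacobi2D (a0 a1 b0 : ℤ → ℤ → ℂ) (b1 : ℤ → ℤ → ℝ) (J : H2 →L[ℂ] H2) : Prop :=
  ∀ (f : H2) (n m : ℤ),
    (J f) (n, m) =
      a0 n (m - 1) * f (n + 1, m - 1) + a1 n m * f (n + 1, m) +
        conj (a0 n m) * f (n + 1, m + 1) +
      b0 n (m - 1) * f (n, m - 1) + (b1 n m : ℂ) * f (n, m) + conj (b0 n m) * f (n, m + 1) +
      a0 (n - 1) (m - 1) * f (n - 1, m - 1) + conj (a1 (n - 1) m) * f (n - 1, m) +
        conj (a0 (n - 1) m) * f (n - 1, m + 1)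

/-- `A` acts on `ℓ²(ℤ)` as the 1D periodic Jacobi matrix `S·diag(c0) + diag(c1) + (S·diag(c0))*`,
i.e. `(A z)ₘ = c0_{m−1} z_{m−1} + c1ₘ zₘ + conj(c0ₘ) z_{m+1}`. -/
def IsJacobi1D (c0 c1 : ℤ → ℂ) (A : H1 →L[ℂ] H1) : Prop :=
  ∀ (z : H1) (m : ℤ),
    (A z) m = c0 (m - 1) * z (m - 1) + c1 m * z m + conj (c0 m) * z (m + 1)

/-- The `p × p` Floquet Jacobi matrix `Âₙ(x)` (resp. `B̂ₙ(x)`) built from the off-diagonal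
sequence `c0` and the diagonal sequence `c1`; the index `i : Fin p` corresponds to the
1-based index `m = i + 1`.  The entries are: diagonal `c1_m`, subdiagonal `(m+1,m) = c0_m`,
superdiagonal `(m,m+1) = conj(c0_m)`, corners `(1,p) = e^{ix} c0_p`,
`(p,1) = e^{−ix} conj(c0_p)`. -/
def floquetMat (p : ℕ) (c0 c1 : ℤ → ℂ) (x : ℝ) : Matrix (Fin p) (Fin p) ℂ :=
  fun i j =>
    (if (i : ℕ) = (j : ℕ) + 1 then c0 (((j : ℕ) : ℤ) + 1) else 0) +
    (if (i : ℕ) = (j : ℕ) then c1 (((i : ℕ) : ℤ) + 1) else 0) +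
    (if (j : ℕ) = (i : ℕ) + 1 then conj (c0 (((i : ℕ) : ℤ) + 1)) else 0) +
    (if (i : ℕ) = 0 ∧ (j : ℕ) = p - 1 then Complex.exp (Complex.I * x) * c0 (p : ℤ) else 0) +
    (if (j : ℕ) = 0 ∧ (i : ℕ) = p - 1 then
      Complex.exp (-(Complex.I * x)) * conj (c0 (p : ℤ)) else 0)

/-- The matrix `Â⁰ₙ` (resp. `B̂⁰ₙ`): the Floquet matrix with corner entries replaced by `0`
(independent of `x`). -/
def floquetMat0 (p : ℕ) (c0 c1 : ℤ → ℂ) : Matrix (Fin p) (Fin p) ℂ :=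
  fun i j =>
    (if (i : ℕ) = (j : ℕ) + 1 then c0 (((j : ℕ) : ℤ) + 1) else 0) +
    (if (i : ℕ) = (j : ℕ) then c1 (((i : ℕ) : ℤ) + 1) else 0) +
    (if (j : ℕ) = (i : ℕ) + 1 then conj (c0 (((i : ℕ) : ℤ) + 1)) else 0)

/-- The `p₁p₂ × p₁p₂` Floquet block matrix `J(x,y)`: diagonal blocks `B̂ₙ(x)`,
block subdiagonal `Âₙ(x)`, block superdiagonal `Âₙ(x)*`, corner blocks `e^{iy} Â_{p₁}(x)`
(top right) and `e^{−iy} Â_{p₁}(x)*` (bottom left).  The block index `q.1 : Fin p₁`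
corresponds to the 1-based index `n = q.1 + 1`. -/
def JMat (p₁ p₂ : ℕ) (a0 a1 b0 : ℤ → ℤ → ℂ) (b1 : ℤ → ℤ → ℝ) (x y : ℝ) :
    Matrix (Fin p₁ × Fin p₂) (Fin p₁ × Fin p₂) ℂ :=
  fun q r =>
    (if (q.1 : ℕ) = (r.1 : ℕ) then
        floquetMat p₂ (b0 (((q.1 : ℕ) : ℤ) + 1)) (fun m => (b1 (((q.1 : ℕ) : ℤ) + 1) m : ℂ)) x
          q.2 r.2
      else 0) +
    (if (q.1 : ℕ) = (r.1 : ℕ) + 1 then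
        floquetMat p₂ (a0 (((r.1 : ℕ) : ℤ) + 1)) (a1 (((r.1 : ℕ) : ℤ) + 1)) x q.2 r.2
      else 0) +
    (if (r.1 : ℕ) = (q.1 : ℕ) + 1 then
        (floquetMat p₂ (a0 (((q.1 : ℕ) : ℤ) + 1)) (a1 (((q.1 : ℕ) : ℤ) + 1)) x)ᴴ q.2 r.2
      else 0) +
    (if (q.1 : ℕ) = 0 ∧ (r.1 : ℕ) = p₁ - 1 then
        Complex.exp (Complex.I * y) * floquetMat p₂ (a0 (p₁ : ℤ)) (a1 (p₁ : ℤ)) x q.2 r.2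
      else 0) +
    (if (r.1 : ℕ) = 0 ∧ (q.1 : ℕ) = p₁ - 1 then
        Complex.exp (-(Complex.I * y)) * (floquetMat p₂ (a0 (p₁ : ℤ)) (a1 (p₁ : ℤ)) x)ᴴ q.2 r.2
      else 0)

/-- The block-tridiagonal matrix `J₀`: diagonal blocks `B̂⁰ₙ`, block subdiagonal `Â⁰ₙ`,
block superdiagonal `(Â⁰ₙ)*`, zero corner blocks. -/
def J0Mat (p₁ p₂ : ℕ) (a0 a1 b0 : ℤ → ℤ → ℂ) (b1 : ℤ → ℤ → ℝ) :
    Matrix (Fin p₁ × Fin p₂) (Fin p₁ × Fin p₂) ℂ :=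
  fun q r =>
    (if (q.1 : ℕ) = (r.1 : ℕ) then
        floquetMat0 p₂ (b0 (((q.1 : ℕ) : ℤ) + 1)) (fun m => (b1 (((q.1 : ℕ) : ℤ) + 1) m : ℂ))
          q.2 r.2
      else 0) +
    (if (q.1 : ℕ) = (r.1 : ℕ) + 1 then
        floquetMat0 p₂ (a0 (((r.1 : ℕ) : ℤ) + 1)) (a1 (((r.1 : ℕ) : ℤ) + 1)) q.2 r.2
      else 0) +
    (if (r.1 : ℕ) = (q.1 : ℕ) + 1 then
        (floquetMat0 p₂ (a0 (((q.1 : ℕ) : ℤ) + 1)) (a1 (((q.1 : ℕ) : ℤ) + 1)))ᴴ q.2 r.2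
      else 0)

/-- The diagonal entries `d₁,…,d_{p₂}` of the matrix `D`:
`d_m = |a¹_{p₁,m}| + |a⁰_{p₁,m}| + |a⁰_{p₁,m−1}|`, where `a⁰_{p₁,0} := a⁰_{p₁,p₂}`. -/
def dVec (p₁ p₂ : ℕ) (a0 a1 : ℤ → ℤ → ℂ) (j : Fin p₂) : ℝ :=
  ‖a1 (p₁ : ℤ) (((j : ℕ) : ℤ) + 1)‖ +
  ‖a0 (p₁ : ℤ) (((j : ℕ) : ℤ) + 1)‖ +
  ‖a0 (p₁ : ℤ) (if (j : ℕ) = 0 then (p₂ : ℤ) else ((j : ℕ) : ℤ))‖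

/-- The (real) diagonal entries of the diagonal matrix `C = diag(C₁,…,C_{p₁})`, where
`Cₙ = diag(cₙ,0,…,0,cₙ)` with `cₙ = |b⁰_{n,p₂}| + |a⁰_{n,p₂}| + |a⁰_{n−1,p₂}|` for
`2 ≤ n ≤ p₁−1`, `C₁ = diag(c₁⁰,0,…,0,c₁⁰) + D` with `c₁⁰ = |b⁰_{1,p₂}| + |a⁰_{1,p₂}|`, and
`C_{p₁} = diag(c⁰,0,…,0,c⁰) + D` with `c⁰ = |b⁰_{p₁,p₂}| + |a⁰_{p₁−1,p₂}|`. -/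
def CDiag (p₁ p₂ : ℕ) (a0 a1 b0 : ℤ → ℤ → ℂ) (q : Fin p₁ × Fin p₂) : ℝ :=
  (if (q.2 : ℕ) = 0 ∨ (q.2 : ℕ) = p₂ - 1 then
      (if (q.1 : ℕ) = 0 then ‖b0 1 (p₂ : ℤ)‖ + ‖a0 1 (p₂ : ℤ)‖
       else if (q.1 : ℕ) = p₁ - 1 then
         ‖b0 (p₁ : ℤ) (p₂ : ℤ)‖ + ‖a0 ((p₁ : ℤ) - 1) (p₂ : ℤ)‖
       else
         ‖b0 (((q.1 : ℕ) : ℤ) + 1) (p₂ : ℤ)‖ +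
         ‖a0 (((q.1 : ℕ) : ℤ) + 1) (p₂ : ℤ)‖ +
         ‖a0 ((q.1 : ℕ) : ℤ) (p₂ : ℤ)‖)
    else 0) +
  (if (q.1 : ℕ) = 0 ∨ (q.1 : ℕ) = p₁ - 1 then dVec p₁ p₂ a0 a1 q.2 else 0)

/-- The diagonal matrix `C`. -/
def CMat (p₁ p₂ : ℕ) (a0 a1 b0 : ℤ → ℤ → ℂ) :
    Matrix (Fin p₁ × Fin p₂) (Fin p₁ × Fin p₂) ℂ :=
  Matrix.diagonal (fun q => (CDiag p₁ p₂ a0 a1 b0 q : ℂ))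

/-- `lam` is the nondecreasing enumeration (with multiplicities) of the eigenvalues of
the Hermitian matrix `M`. -/
def IsOrderedEigs {N : Type*} [Fintype N] [DecidableEq N] (M : Matrix N N ℂ) {k : ℕ}
    (lam : Fin k → ℝ) : Prop :=
  Monotone lam ∧ ∃ (hM : M.IsHermitian) (e : Fin k ≃ N), ∀ i, lam i = hM.eigenvalues (e i)

/-! With `a⁰ = a¹ = 0` the rows `n` decouple and `𝒥` acts on row `n` as `S + S* + vₙ` with
`vₙ = 4ñ ∈ {4, …, 4p₁}`. Since `|vₙ - (2p₁ + 2)| ≤ 2p₁ - 2` and the shifts are isometries,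
`‖𝒥 - (2p₁ + 2)‖ ≤ 2p₁`, so `σ(𝒥) ⊆ [2, 4p₁ + 2]`. Conversely, for `λ = vₙ + 2 cos θ` the plane wave
`e^{imθ}` on row `n`, truncated to `|m| ≤ N`, has squared norm `2N + 1`, while applying `𝒥 - λ` to
it leaves a defect on four sites only; hence `𝒥 - λ` is not bounded below and `λ ∈ σ(𝒥)`. The
bands `[4ñ - 2, 4ñ + 2]` tile `[2, 4p₁ + 2]`. -/

namespace Memℓp

variable {α β E : Type*} [NormedAddCommGroup E] {p : ℝ≥0∞}

theorem comp_equiv {f : β → E} (hf : Memℓp f p) (e : α ≃ β) : Memℓp (f ∘ e) p := by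
  obtain (rfl | rfl | hp) := p.trichotomy
  · rw [memℓp_zero_iff] at hf ⊢
    exact hf.preimage e.injective.injOn
  · rw [memℓp_infty_iff] at hf ⊢
    exact hf.mono (Set.range_comp_subset_range e fun i => ‖f i‖)
  · rw [memℓp_gen_iff hp] at hf ⊢
    exact e.summable_iff.mpr hf

theorem of_finite_support {f : α → E} {s : Finset α} (hf : ∀ i ∉ s, f i = 0) : Memℓp f p :=
  (memℓp_zero (s.finite_toSet.subset fun i hi => not_imp_comm.mp (hf i) hi)).of_exponent_ge
    zero_le

end Memℓp

namespace lp

variable {α β E : Type*} [NormedAddCommGroup E] {p : ℝ≥0∞}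

def compEquiv (e : α ≃ β) (f : lp (fun _ : β => E) p) : lp (fun _ : α => E) p :=
  ⟨f ∘ e, (lp.memℓp f).comp_equiv e⟩

theorem norm_compEquiv (hp : 0 < p.toReal) (e : α ≃ β) (f : lp (fun _ : β => E) p) :
    ‖compEquiv e f‖ = ‖f‖ := by
  rw [norm_eq_tsum_rpow hp, norm_eq_tsum_rpow hp]
  exact congrArg (· ^ _) (e.tsum_eq fun i => ‖f i‖ ^ p.toReal)

theorem norm_sq_eq_sum_of_support_subset {F : α → Type*} [∀ i, NormedAddCommGroup (F i)]
    (f : lp F 2) {s : Finset α} (hf : ∀ i ∉ s, f i = 0) :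
    ‖f‖ ^ 2 = ∑ i ∈ s, ‖f i‖ ^ 2 := by
  have h := norm_rpow_eq_tsum (p := 2) (by norm_num) f
  simp only [ENNReal.toReal_ofNat, Real.rpow_two] at h
  rw [h, tsum_eq_sum fun i hi => by simp [hf i hi]]

end lp

theorem spectrum.norm_sub_le_of_mem {𝕜 A : Type*} [NormedField 𝕜] [NormedRing A]
    [NormedAlgebra 𝕜 A] [CompleteSpace A] {a : A} {k : 𝕜} (hk : k ∈ spectrum 𝕜 a) (c : 𝕜) :
    ‖k - c‖ ≤ ‖a - algebraMap 𝕜 A c‖ * ‖(1 : A)‖ :=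
  spectrum.norm_le_norm_mul_of_mem <| by
    rw [← spectrum.sub_singleton_eq]
    exact Set.sub_mem_sub hk rfl

theorem ContinuousLinearMap.mem_spectrum_of_forall_lt_norm {𝕜 E : Type*}
    [NontriviallyNormedField 𝕜] [NormedAddCommGroup E] [NormedSpace 𝕜 E] (T : E →L[𝕜] E) (z : 𝕜)
    (h : ∀ C : ℝ, ∃ f : E, C * ‖(T - algebraMap 𝕜 (E →L[𝕜] E) z) f‖ < ‖f‖) :
    z ∈ spectrum 𝕜 T := by
  rw [spectrum.mem_iff]
  rintro ⟨u, hu⟩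
  obtain ⟨f, hf⟩ := h ‖(↑u⁻¹ : E →L[𝕜] E)‖
  have hf' : (↑u⁻¹ : E →L[𝕜] E) ((u : E →L[𝕜] E) f) = f :=
    congrArg (fun S : E →L[𝕜] E => S f) u.inv_mul
  have hu' : ‖(u : E →L[𝕜] E) f‖ = ‖(T - algebraMap 𝕜 (E →L[𝕜] E) z) f‖ := by
    rw [hu, ← norm_neg, ← neg_apply, neg_sub]
  refine (hf.trans_le ?_).false
  calc ‖f‖ = ‖(↑u⁻¹ : E →L[𝕜] E) ((u : E →L[𝕜] E) f)‖ := by rw [hf']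
    _ ≤ _ := by rw [← hu']; exact ContinuousLinearMap.le_opNorm _ _

theorem Set.biUnion_range_Icc_add_mul {α : Type*} [Semiring α] [LinearOrder α] [IsOrderedRing α]
    (a : α) {d : α} (hd : 0 ≤ d) {p : ℕ} (hp : p ≠ 0) :
    ⋃ k ∈ Finset.range p, Set.Icc (a + k * d) (a + (k + 1) * d) = Set.Icc a (a + p * d) := by
  induction p with
  | zero => exact absurd rfl hp
  | succ q ih =>
    rcases Nat.eq_zero_or_pos q with rfl | hq
    · simp
    rw [Finset.range_add_one, Finset.set_biUnion_insert, ih hq.ne', Set.union_comm,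
      Set.Icc_union_Icc_eq_Icc (le_add_of_nonneg_right (mul_nonneg q.cast_nonneg hd))
        (by gcongr; exact le_add_of_nonneg_right zero_le_one)]
    push_cast
    rfl

/-- `T` acts on `ℓ²(ℤ; ℓ²(ℤ))` as `⨁ₙ (S + S* + vₙ)`: the rows decouple, and each is a discrete
Schrödinger operator with constant potential `vₙ`. -/
def IsRowSchrodinger (v : ℤ → ℂ) (T : H2 →L[ℂ] H2) : Prop :=
  ∀ (f : H2) (n m : ℤ), T f (n, m) = f (n, m - 1) + v n * f (n, m) + f (n, m + 1)

theorem IsJacobi2D.isRowSchrodinger {a0 a1 b0 : ℤ → ℤ → ℂ} {b1 : ℤ → ℤ → ℝ} {T : H2 →L[ℂ] H2}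
    (hT : IsJacobi2D a0 a1 b0 b1 T) (ha0 : ∀ n m, a0 n m = 0) (ha1 : ∀ n m, a1 n m = 0)
    (hb0 : ∀ n m, b0 n m = 1) {u : ℤ → ℝ} (hb1 : ∀ n m, b1 n m = u n) :
    IsRowSchrodinger (fun n => u n) T := by
  intro f n m
  simp [hT f n m, ha0, ha1, hb0, hb1]

namespace IsRowSchrodinger

variable {v : ℤ → ℂ} {T : H2 →L[ℂ] H2}

theorem norm_sub_apply_le (hT : IsRowSchrodinger v T) {c : ℂ} {r : ℝ} (hv : ∀ n, ‖v n - c‖ ≤ r)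
    (f : H2) : ‖(T - algebraMap ℂ (H2 →L[ℂ] H2) c) f‖ ≤ (r + 2) * ‖f‖ := by
  have hr : 0 ≤ r := (norm_nonneg _).trans (hv 0)
  have hwf : ∀ x : ℤ × ℤ, ‖(v x.1 - c) * f x‖ ≤ ‖((r : ℂ) • f) x‖ := fun x => by
    rw [lp.coeFn_smul, Pi.smul_apply, norm_smul, norm_mul, Complex.norm_real,
      Real.norm_of_nonneg hr]
    exact mul_le_mul_of_nonneg_right (hv x.1) (norm_nonneg _)
  let w : H2 := ⟨fun x => (v x.1 - c) * f x, (lp.memℓp _).mono' hwf⟩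
  have hw : ‖w‖ ≤ r * ‖f‖ := by
    calc ‖w‖ ≤ ‖(r : ℂ) • f‖ := lp.norm_mono two_ne_zero hwf
      _ = r * ‖f‖ := by rw [norm_smul, Complex.norm_real, Real.norm_of_nonneg hr]
  let down := (Equiv.refl ℤ).prodCongr (Equiv.subRight (1 : ℤ))
  let up := (Equiv.refl ℤ).prodCongr (Equiv.addRight (1 : ℤ))
  have hsplit :
      (T - algebraMap ℂ (H2 →L[ℂ] H2) c) f = lp.compEquiv down f + lp.compEquiv up f + w := by
    ext ⟨n, m⟩
    simp only [sub_apply, Algebra.algebraMap_eq_smul_one, smul_apply, one_apply_eq_self,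
      lp.coeFn_sub, lp.coeFn_smul, Pi.sub_apply, Pi.smul_apply, smul_eq_mul, hT f n m]
    change _ = f (n, m - 1) + f (n, m + 1) + (v n - c) * f (n, m)
    ring
  calc ‖(T - algebraMap ℂ (H2 →L[ℂ] H2) c) f‖
      ≤ ‖lp.compEquiv down f‖ + ‖lp.compEquiv up f‖ + ‖w‖ := hsplit ▸ norm_add₃_le
    _ ≤ ‖f‖ + ‖f‖ + r * ‖f‖ := by
      rw [lp.norm_compEquiv (by norm_num), lp.norm_compEquiv (by norm_num)]
      gcongr
    _ = (r + 2) * ‖f‖ := by ring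

theorem norm_sub_le_of_mem_spectrum (hT : IsRowSchrodinger v T) {c : ℂ} {r : ℝ}
    (hv : ∀ n, ‖v n - c‖ ≤ r) {z : ℂ} (hz : z ∈ spectrum ℂ T) : ‖z - c‖ ≤ r + 2 := by
  have hr : 0 ≤ r := (norm_nonneg _).trans (hv 0)
  calc ‖z - c‖ ≤ ‖T - algebraMap ℂ (H2 →L[ℂ] H2) c‖ * ‖(1 : H2 →L[ℂ] H2)‖ :=
        spectrum.norm_sub_le_of_mem hz c
    _ ≤ (r + 2) * 1 :=
        mul_le_mul (ContinuousLinearMap.opNorm_le_bound _ (by positivity) (hT.norm_sub_apply_le hv))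
          ContinuousLinearMap.norm_id_le (norm_nonneg _) (by positivity)
    _ = r + 2 := mul_one _

end IsRowSchrodinger

theorem Complex.exp_sub_mul_I_add_exp_add_mul_I (x y : ℂ) :
    exp (x - y * I) + exp (x + y * I) = 2 * cos y * exp x := by
  rw [two_cos, exp_sub, exp_add, neg_mul, exp_neg]
  field_simp
  ring

/-- A bounded solution `e^{imθ}` of `z_{m-1} + z_{m+1} = 2 cos θ · z_m`, cut off outside `[-N, N]`:
the Weyl vectors for `2 cos θ`. -/
def truncatedWave (θ : ℝ) (N : ℕ) (m : ℤ) : ℂ :=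
  if m ∈ Finset.Icc (-(N : ℤ)) N then Complex.exp (m * θ * Complex.I) else 0

namespace truncatedWave

variable (θ : ℝ) (N : ℕ)

theorem norm_le_one (m : ℤ) : ‖truncatedWave θ N m‖ ≤ 1 := by
  unfold truncatedWave
  split_ifs
  · simp [Complex.norm_exp]
  · simp

theorem sub_one_add_add_one {m : ℤ}
    (hm : m ∉ ({-(N : ℤ) - 1, -(N : ℤ), (N : ℤ), (N : ℤ) + 1} : Finset ℤ)) :
    truncatedWave θ N (m - 1) + truncatedWave θ N (m + 1) =
      (2 * Real.cos θ : ℝ) * truncatedWave θ N m := by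
  simp only [Finset.mem_insert, Finset.mem_singleton, not_or] at hm
  unfold truncatedWave
  simp only [Finset.mem_Icc]
  by_cases hin : -(N : ℤ) < m ∧ m < N
  · rw [if_pos (by omega), if_pos (by omega), if_pos (by omega)]
    push_cast
    rw [← Complex.exp_sub_mul_I_add_exp_add_mul_I]
    congr 2 <;> ring
  · rw [if_neg (by omega), if_neg (by omega), if_neg (by omega)]
    simp

theorem norm_sub_one_add_add_one_sub_le (m : ℤ) :
    ‖truncatedWave θ N (m - 1) + truncatedWave θ N (m + 1) -
      (2 * Real.cos θ : ℝ) * truncatedWave θ N m‖ ≤ 4 := by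
  have hcos : ‖((2 * Real.cos θ : ℝ) : ℂ)‖ ≤ 2 := by
    rw [Complex.norm_real, Real.norm_eq_abs, abs_mul, abs_two]
    linarith [Real.abs_cos_le_one θ]
  calc _ ≤ ‖truncatedWave θ N (m - 1)‖ + ‖truncatedWave θ N (m + 1)‖ +
        ‖((2 * Real.cos θ : ℝ) : ℂ)‖ * ‖truncatedWave θ N m‖ := by
        grw [norm_sub_le, norm_add_le, norm_mul]
    _ ≤ 1 + 1 + 2 * 1 := by
        gcongr <;> exact norm_le_one θ N _
    _ = 4 := by norm_num

end truncatedWave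

def rowWave (n : ℤ) (θ : ℝ) (N : ℕ) : H2 :=
  ⟨fun x => if x.1 = n then truncatedWave θ N x.2 else 0,
    Memℓp.of_finite_support (s := {n} ×ˢ Finset.Icc (-(N : ℤ)) N) fun x hx => by
      rw [Finset.mem_product, Finset.mem_singleton, not_and] at hx
      split_ifs with h
      exacts [if_neg (hx h), rfl]⟩

theorem rowWave_apply (n : ℤ) (θ : ℝ) (N : ℕ) (x : ℤ × ℤ) :
    rowWave n θ N x = if x.1 = n then truncatedWave θ N x.2 else 0 :=
  rfl

theorem norm_sq_rowWave (n : ℤ) (θ : ℝ) (N : ℕ) : ‖rowWave n θ N‖ ^ 2 = 2 * N + 1 := by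
  have hzero : ∀ x ∉ {n} ×ˢ Finset.Icc (-(N : ℤ)) N, rowWave n θ N x = 0 := fun x hx => by
    rw [Finset.mem_product, Finset.mem_singleton, not_and] at hx
    rw [rowWave_apply]
    split_ifs with h
    exacts [if_neg (hx h), rfl]
  have hone : ∀ x ∈ {n} ×ˢ Finset.Icc (-(N : ℤ)) N, ‖rowWave n θ N x‖ ^ 2 = 1 := fun x hx => by
    rw [Finset.mem_product, Finset.mem_singleton] at hx
    rw [rowWave_apply, if_pos hx.1, truncatedWave, if_pos hx.2]
    simp [Complex.norm_exp]
  rw [lp.norm_sq_eq_sum_of_support_subset _ hzero, Finset.sum_congr rfl hone, Finset.sum_const,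
    Finset.card_product, Finset.card_singleton, Int.card_Icc, one_mul,
    show ((N : ℤ) + 1 - -(N : ℤ)).toNat = 2 * N + 1 by omega]
  ring

namespace IsRowSchrodinger

variable {v : ℤ → ℂ} {T : H2 →L[ℂ] H2}

theorem sub_apply_rowWave (hT : IsRowSchrodinger v T) (n : ℤ) (θ : ℝ) (N : ℕ) (x : ℤ × ℤ) :
    (T - algebraMap ℂ (H2 →L[ℂ] H2) (v n + (2 * Real.cos θ : ℝ))) (rowWave n θ N) x =
      if x.1 = n then
        truncatedWave θ N (x.2 - 1) + truncatedWave θ N (x.2 + 1) -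
          (2 * Real.cos θ : ℝ) * truncatedWave θ N x.2
      else 0 := by
  obtain ⟨a, b⟩ := x
  simp only [sub_apply, Algebra.algebraMap_eq_smul_one, smul_apply, one_apply_eq_self,
    lp.coeFn_sub, lp.coeFn_smul, Pi.sub_apply, Pi.smul_apply, smul_eq_mul, hT _ a b, rowWave_apply]
  split_ifs with h
  · rw [h]
    ring
  · ring

theorem norm_sq_sub_apply_rowWave_le (hT : IsRowSchrodinger v T) (n : ℤ) (θ : ℝ) (N : ℕ) :
    ‖(T - algebraMap ℂ (H2 →L[ℂ] H2) (v n + (2 * Real.cos θ : ℝ))) (rowWave n θ N)‖ ^ 2 ≤ 64 := by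
  set D : Finset ℤ := {-(N : ℤ) - 1, -(N : ℤ), (N : ℤ), (N : ℤ) + 1}
  have hzero : ∀ x ∉ {n} ×ˢ D,
      (T - algebraMap ℂ (H2 →L[ℂ] H2) (v n + (2 * Real.cos θ : ℝ))) (rowWave n θ N) x = 0 :=
    fun x hx => by
      rw [Finset.mem_product, Finset.mem_singleton, not_and] at hx
      rw [hT.sub_apply_rowWave]
      split_ifs with h
      · exact sub_eq_zero.mpr (truncatedWave.sub_one_add_add_one θ N (hx h))
      · rfl
  rw [lp.norm_sq_eq_sum_of_support_subset _ hzero]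
  calc _ ≤ ∑ _x ∈ {n} ×ˢ D, (4 : ℝ) ^ 2 := Finset.sum_le_sum fun x _ => by
        rw [hT.sub_apply_rowWave]
        split_ifs
        · gcongr
          exact truncatedWave.norm_sub_one_add_add_one_sub_le θ N x.2
        · simp
    _ ≤ 4 * 4 ^ 2 := by
        rw [Finset.sum_const, nsmul_eq_mul, Finset.card_product, Finset.card_singleton, one_mul]
        gcongr
        exact_mod_cast Finset.card_le_four
    _ = 64 := by norm_num

theorem add_two_mul_cos_mem_spectrum (hT : IsRowSchrodinger v T) (n : ℤ) (θ : ℝ) :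
    v n + (2 * Real.cos θ : ℝ) ∈ spectrum ℂ T := by
  refine ContinuousLinearMap.mem_spectrum_of_forall_lt_norm _ _ fun C => ?_
  obtain ⟨N, hN⟩ := exists_nat_gt (64 * C ^ 2)
  refine ⟨rowWave n θ N, lt_of_pow_lt_pow_left₀ 2 (norm_nonneg _) ?_⟩
  calc (C * _) ^ 2 = C ^ 2 * _ := mul_pow _ _ _
    _ ≤ C ^ 2 * 64 := by gcongr; exact hT.norm_sq_sub_apply_rowWave_le n θ N
    _ < 2 * N + 1 := by linarith [(N.cast_nonneg : (0 : ℝ) ≤ N)]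
    _ = _ := (norm_sq_rowWave n θ N).symm

theorem add_mem_spectrum (hT : IsRowSchrodinger v T) (n : ℤ) {s : ℝ} (hs : |s| ≤ 2) :
    v n + s ∈ spectrum ℂ T := by
  obtain ⟨hs₁, hs₂⟩ := abs_le.mp hs
  have hθ : 2 * Real.cos (Real.arccos (s / 2)) = s := by
    rw [Real.cos_arccos (by linarith) (by linarith)]
    ring
  simpa [hθ] using hT.add_two_mul_cos_mem_spectrum n (Real.arccos (s / 2))

end IsRowSchrodinger

theorem abs_four_mul_sub_one_emod_add_one_sub_le {p : ℕ} (hp : p ≠ 0) (n : ℤ) :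
    |4 * (((n - 1) % (p : ℤ) + 1 : ℤ) : ℝ) - (2 * p + 2)| ≤ 2 * p - 2 := by
  have h₀ : 0 ≤ (n - 1) % (p : ℤ) := Int.emod_nonneg _ (by omega)
  have h₁ : (n - 1) % (p : ℤ) < p := Int.emod_lt_of_pos _ (by omega)
  have h₀' : (0 : ℝ) ≤ ((n - 1) % (p : ℤ) : ℤ) := by exact_mod_cast h₀
  have h₁' : (((n - 1) % (p : ℤ) : ℤ) : ℝ) + 1 ≤ p := by exact_mod_cast h₁
  rw [abs_le]
  push_cast
  constructor <;> linarith

theorem example_one_sharp_general (p₁ p₂ : ℕ) (hp₁ : 3 ≤ p₁)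
    (a0 a1 b0 : ℤ → ℤ → ℂ) (b1 : ℤ → ℤ → ℝ)
    (hva0 : ∀ n m : ℤ, a0 n m = 0) (hva1 : ∀ n m : ℤ, a1 n m = 0)
    (hvb0 : ∀ n m : ℤ, b0 n m = 1)
    (hvb1 : ∀ n m : ℤ, b1 n m = 4 * (((n - 1) % (p₁ : ℤ) + 1 : ℤ) : ℝ))
    (𝒥 : H2 →L[ℂ] H2) (h𝒥 : IsJacobi2D a0 a1 b0 b1 𝒥) :
    {t : ℝ | (t : ℂ) ∈ spectrum ℂ 𝒥} =
      (⋃ n ∈ Finset.range p₁, Set.Icc (4 * ((n : ℝ) + 1) - 2) (4 * ((n : ℝ) + 1) + 2)) ∧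
    {t : ℝ | (t : ℂ) ∈ spectrum ℂ 𝒥} = Set.Icc (2 : ℝ) (4 * (p₁ : ℝ) + 2) ∧
    MeasureTheory.volume {t : ℝ | (t : ℂ) ∈ spectrum ℂ 𝒥} = ENNReal.ofReal (4 * (p₁ : ℝ)) ∧
    (∀ α β : ℤ,
      4 * ∑ n ∈ Finset.range p₁, ‖b0 ((n : ℤ) + 1) β‖ +
      4 * ∑ m ∈ Finset.range p₂, ‖a1 α ((m : ℤ) + 1)‖ = 4 * (p₁ : ℝ)) := by
  have hT := h𝒥.isRowSchrodinger hva0 hva1 hvb0 hvb1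
  have hU : ⋃ n ∈ Finset.range p₁, Set.Icc (4 * ((n : ℝ) + 1) - 2) (4 * ((n : ℝ) + 1) + 2) =
      Set.Icc (2 : ℝ) (4 * p₁ + 2) := by
    rw [show 4 * (p₁ : ℝ) + 2 = 2 + p₁ * 4 by ring,
      ← Set.biUnion_range_Icc_add_mul 2 (by norm_num : (0 : ℝ) ≤ 4) (by omega)]
    refine Set.iUnion₂_congr fun k _ => ?_
    congr 1 <;> ring
  have hS : {t : ℝ | (t : ℂ) ∈ spectrum ℂ 𝒥} = Set.Icc (2 : ℝ) (4 * p₁ + 2) := by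
    refine Set.Subset.antisymm (fun t ht => ?_) (hU ▸ Set.iUnion₂_subset fun k hk t ht => ?_)
    · have hball := hT.norm_sub_le_of_mem_spectrum (c := ((2 * p₁ + 2 : ℝ) : ℂ)) (fun n => by
        rw [← Complex.ofReal_sub, Complex.norm_real, Real.norm_eq_abs]
        exact abs_four_mul_sub_one_emod_add_one_sub_le (by omega) n) ht
      rw [← Complex.ofReal_sub, Complex.norm_real, Real.norm_eq_abs, abs_le] at hball
      constructor <;> linarith
    · have hband := hT.add_mem_spectrum (k + 1) (s := t - 4 * (k + 1))
        (abs_le.mpr ⟨by linarith [ht.1], by linarith [ht.2]⟩)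
      rw [add_sub_cancel_right, Int.emod_eq_of_lt (by omega) (by simpa using hk)] at hband
      simpa using hband
  refine ⟨hS.trans hU.symm, hS, ?_, fun α β => ?_⟩
  · rw [hS, Real.volume_Icc]
    ring_nf
  · simp [hvb0, hva1]

/-- Example 1: if `a⁰ = a¹ = 0`, `b⁰ = 1` and `b¹_{n,m} = 4ñ` where
`ñ ∈ {1,…,p₁}` is the representative of `n` modulo `p₁` (so `Aₙ = 0` and
`Bₙ = S + S⁻¹ + 4ñ·I`), then `σ(𝒥) = ⋃_{n=1}^{p₁}[4n−2, 4n+2] = [2, 4p₁+2]`; in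
particular `mes(σ(𝒥)) = 4p₁`, so the estimate
`mes(σ(𝒥)) ≤ 4 min_β Σ_{n=1}^{p₁}|b⁰_{n,β}| + 4 min_α Σ_{m=1}^{p₂}|a¹_{α,m}| = 4p₁`
is attained with equality. -/
theorem example_one_sharp (p₁ p₂ : ℕ) (hp₁ : 3 ≤ p₁) (hp₂ : 3 ≤ p₂)
    (a0 a1 b0 : ℤ → ℤ → ℂ) (b1 : ℤ → ℤ → ℝ)
    (ha0 : Periodic2 p₁ p₂ a0) (ha1 : Periodic2 p₁ p₂ a1)
    (hb0 : Periodic2 p₁ p₂ b0) (hb1 : Periodic2 p₁ p₂ b1)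
    (hva0 : ∀ n m : ℤ, a0 n m = 0) (hva1 : ∀ n m : ℤ, a1 n m = 0)
    (hvb0 : ∀ n m : ℤ, b0 n m = 1)
    (hvb1 : ∀ n m : ℤ, b1 n m = 4 * (((n - 1) % (p₁ : ℤ) + 1 : ℤ) : ℝ))
    (𝒥 : H2 →L[ℂ] H2) (h𝒥 : IsJacobi2D a0 a1 b0 b1 𝒥) (hsa : IsSelfAdjoint 𝒥) :
    {t : ℝ | (t : ℂ) ∈ spectrum ℂ 𝒥} =
      (⋃ n ∈ Finset.range p₁, Set.Icc (4 * ((n : ℝ) + 1) - 2) (4 * ((n : ℝ) + 1) + 2)) ∧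
    {t : ℝ | (t : ℂ) ∈ spectrum ℂ 𝒥} = Set.Icc (2 : ℝ) (4 * (p₁ : ℝ) + 2) ∧
    MeasureTheory.volume {t : ℝ | (t : ℂ) ∈ spectrum ℂ 𝒥} = ENNReal.ofReal (4 * (p₁ : ℝ)) ∧
    (∀ α β : ℤ,
      4 * ∑ n ∈ Finset.range p₁, ‖b0 ((n : ℤ) + 1) β‖ +
      4 * ∑ m ∈ Finset.range p₂, ‖a1 α ((m : ℤ) + 1)‖ = 4 * (p₁ : ℝ)) :=
  example_one_sharp_general p₁ p₂ hp₁ a0 a1 b0 b1 hva0 hva1 hvb0 hvb1 𝒥 h𝒥
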